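/- Let T, C ∈ ℕ and ⇒, ⇑ ⊆ {0,…,T}×{0,…,T}. There exists a function tile : ℕ × {0,…,C} → {0,…,T} satisfying (1) tile(x,0) = 0 and tile(x,C) = T for every x ∈ ℕ, (2) (tile(x,y), tile(x+1,y)) ∈ ⇒ for every x ∈ ℕ and every 0 ≤ y ≤ C, and (3) (tile(x,y), tile(x,y+1)) ∈ ⇑ for every x ∈ ℕ and every 0 ≤ y < C, if and only if there exists a function tile : ℕ × {0,…,C} → {0,…,T} satisfying (1), (2), (3) and additionally (4): there exist prefix ∈ ℕ and period ∈ ℕ with period ≥ 1 such that for every x ≥ prefix and every 0 ≤ y ≤ C, tile(x,y) = tile(x + period, y). -/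
import Mathlib


/-- Lemma 1 of the paper. An instance `(T, ⇒, ⇑, C)` of the
exponential-corridor tiling problem (with `Hrel` playing the role of `⇒` and
`Vrel` of `⇑`, both subsets of `{0,…,T} × {0,…,T}`) admits a tiling function
`tile : ℕ × {0,…,C} → {0,…,T}` satisfying conditions (1)–(3) iff it admits one
that additionally is eventually periodic in the first coordinate (condition (4)). -/
theorem exponential_corridor_tiling_iff_periodic
    (T C : ℕ) (Hrel Vrel : Set (ℕ × ℕ))
    (hH : ∀ q ∈ Hrel, q.1 ≤ T ∧ q.2 ≤ T)
    (hV : ∀ q ∈ Vrel, q.1 ≤ T ∧ q.2 ≤ T) :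
    (∃ tile : ℕ → ℕ → ℕ,
      (∀ x y, y ≤ C → tile x y ≤ T) ∧
      (∀ x, tile x 0 = 0 ∧ tile x C = T) ∧
      (∀ x y, y ≤ C → (tile x y, tile (x + 1) y) ∈ Hrel) ∧
      (∀ x y, y < C → (tile x y, tile x (y + 1)) ∈ Vrel)) ↔
    (∃ tile : ℕ → ℕ → ℕ,
      (∀ x y, y ≤ C → tile x y ≤ T) ∧
      (∀ x, tile x 0 = 0 ∧ tile x C = T) ∧
      (∀ x y, y ≤ C → (tile x y, tile (x + 1) y) ∈ Hrel) ∧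
      (∀ x y, y < C → (tile x y, tile x (y + 1)) ∈ Vrel) ∧
      ∃ (pre period : ℕ), 1 ≤ period ∧
        ∀ x y, pre ≤ x → y ≤ C → tile x y = tile (x + period) y) := by
  constructor
  · rintro ⟨tile, hbd, hbdry, hHor, hVer⟩
    -- pigeonhole: two equal columns
    have key : ∃ i j : ℕ, i < j ∧ ∀ y ≤ C, tile i y = tile j y := by
      let F : ℕ → Fin (C + 1) → Fin (T + 1) := fun x y =>
        ⟨tile x y, Nat.lt_succ_of_le (hbd x y (Nat.le_of_lt_succ y.isLt))⟩
      obtain ⟨a, b, hne, hab⟩ := Finite.exists_ne_map_eq_of_infinite F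
      have heq : ∀ y ≤ C, tile a y = tile b y := by
        intro y hy
        have := congrFun hab ⟨y, Nat.lt_succ_of_le hy⟩
        simpa [F, Fin.ext_iff] using this
      rcases hne.lt_or_gt with h | h
      · exact ⟨a, b, h, heq⟩
      · exact ⟨b, a, h, fun y hy => (heq y hy).symm⟩
    obtain ⟨i, j, hij, heq⟩ := key
    set p := j - i with hp_def
    have hp : 0 < p := by omega
    -- the new tiling
    set g : ℕ → ℕ := fun x => if x < i then x else i + (x - i) % p with hg
    refine ⟨fun x y => tile (g x) y, fun x y hy => hbd _ y hy, fun x => hbdry _,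
      ?_, fun x y hy => hVer _ y hy, i, p, hp, ?_⟩
    · -- horizontal condition
      intro x y hy
      by_cases hx : x < i
      · have hgx : g x = x := by simp [hg, hx]
        have hgx1 : g (x + 1) = x + 1 := by
          by_cases h1 : x + 1 < i
          · simp [hg, h1]
          · have : x + 1 = i := by omega
            simp [hg, h1, this]
        show (tile (g x) y, tile (g (x + 1)) y) ∈ Hrel
        rw [hgx, hgx1]; exact hHor x y hy
      · push_neg at hx
        have hgx : g x = i + (x - i) % p := by simp [hg, not_lt.2 hx]
        have hgx1 : g (x + 1) = i + ((x - i) % p + 1) % p := by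
          have h1 : ¬ x + 1 < i := by omega
          have h2 : x + 1 - i = (x - i) + 1 := by omega
          rw [hg]
          simp only [h1, if_false, h2]
          rw [← Nat.mod_add_mod]
        set r := (x - i) % p with hr_def
        have hr : r < p := Nat.mod_lt _ hp
        show (tile (g x) y, tile (g (x + 1)) y) ∈ Hrel
        rw [hgx, hgx1]
        by_cases hrp : r + 1 < p
        · rw [Nat.mod_eq_of_lt hrp]
          rw [← Nat.add_assoc]
          exact hHor (i + r) y hy
        · have hre : r + 1 = p := by omega
          have : (r + 1) % p = 0 := by rw [hre]; exact Nat.mod_self p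
          rw [this, Nat.add_zero]
          have h1 : i + r + 1 = j := by omega
          have h2 := hHor (i + r) y hy
          rw [h1, ← heq y hy] at h2
          exact h2
    · -- periodicity
      intro x y hx hy
      have h1 : ¬ x < i := by omega
      have h2 : ¬ x + p < i := by omega
      have h3 : x + p - i = (x - i) + p := by omega
      simp only [hg, h1, h2, if_false, h3, Nat.add_mod_right]
  · rintro ⟨tile, hbd, hbdry, hHor, hVer, _⟩
    exact ⟨tile, hbd, hbdry, hHor, hVer⟩
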